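/- For every l₀ with 0 < l₀ < 2π there exists a positive constant ρ = ρ(l₀) such that for every spherical triangle △(x,y,z) in the round unit sphere 𝕊² with side lengths |y,z| ≤ π/2 and |x,y| ≤ l₀/2 and with angle ∠_y(x,z) ≥ π/2 at y, one has |x,y| ≤ |x,z| + |z,y| − ρ·|z,y|. -/

import Mathlib

open Set Metric Filter
open scoped ENNReal NNReal

noncomputable section

universe u v

namespace Paper

/-! ### Singular homology (ambient version):
For subsets `S ⊆ T` of a topological space `X`, `SH n T S` is the `n`-th relative singular
homology group (with `ℤ` coefficients) of the pair of subspaces `(T, S)`; this is implemented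
inside the singular chain complex of `X`, using that singular simplices of the subspace `T`
correspond exactly to singular simplices of `X` with range inside `T`. -/

/-- The topological simplex, as in the older Mathlib (`ℝ≥0`-valued functions summing to `1`). -/
def SimplexCategory.toTopObj (x : _root_.SimplexCategory) : Set (Fin (x.len + 1) → ℝ≥0) :=
  {f | ∑ i, f i = 1}

/-- The map of topological simplices induced by a morphism, as in the older Mathlib. -/
def SimplexCategory.toTopMap {x y : _root_.SimplexCategory} (f : x ⟶ y)
    (g : SimplexCategory.toTopObj x) : SimplexCategory.toTopObj y :=
  ⟨fun i => ∑ j ∈ Finset.univ.filter (fun j => f.toOrderHom j = i), g.1 j, by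
    simp only [SimplexCategory.toTopObj, Set.mem_setOf_eq]
    rw [← Finset.sum_biUnion]
    · have hg : ∑ i, g.1 i = 1 := g.2
      convert hg
      simp [Finset.eq_univ_iff_forall]
    · apply Set.pairwiseDisjoint_filter⟩

theorem SimplexCategory.continuous_toTopMap {x y : _root_.SimplexCategory} (f : x ⟶ y) :
    Continuous (SimplexCategory.toTopMap f) := by
  refine Continuous.subtype_mk (continuous_pi fun i => ?_) _
  exact continuous_finset_sum _ (fun j _ => (continuous_apply _).comp continuous_subtype_val)

/-- The topological standard `n`-simplex. -/
abbrev Δtop (n : ℕ) : Type := ↥(SimplexCategory.toTopObj (SimplexCategory.mk n))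

/-- The group of singular `n`-chains of `X` (with integer coefficients). -/
abbrev SChain (n : ℕ) (X : Type u) [TopologicalSpace X] : Type u :=
  FreeAbelianGroup C(Δtop n, X)

/-- The `i`-th face inclusion of the standard simplices. -/
def faceMap (n : ℕ) (i : Fin (n + 2)) : C(Δtop n, Δtop (n + 1)) :=
  ⟨SimplexCategory.toTopMap (SimplexCategory.δ i), SimplexCategory.continuous_toTopMap _⟩

/-- The singular boundary operator. -/
def bnd {X : Type u} [TopologicalSpace X] (n : ℕ) : SChain (n + 1) X →+ SChain n X :=
  FreeAbelianGroup.lift fun σ : C(Δtop (n + 1), X) =>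
    ∑ i : Fin (n + 2), ((-1 : ℤ) ^ (i : ℕ)) • FreeAbelianGroup.of (σ.comp (faceMap n i))

/-- The subgroup of `n`-chains supported in a subset `S ⊆ X`. -/
def chainsIn {X : Type u} [TopologicalSpace X] (n : ℕ) (S : Set X) :
    AddSubgroup (SChain n X) :=
  AddSubgroup.closure {c | ∃ σ : C(Δtop n, X), Set.range σ ⊆ S ∧ c = FreeAbelianGroup.of σ}

/-- Relative cycles of the pair `(T, S)`. -/
def relCyc {X : Type u} [TopologicalSpace X] : (n : ℕ) → (T S : Set X) → AddSubgroup (SChain n X)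
  | 0, T, _ => chainsIn 0 T
  | (m + 1), T, S => chainsIn (m + 1) T ⊓ (chainsIn m S).comap (bnd m)

/-- Relative boundaries of the pair `(T, S)`. -/
def relBdry {X : Type u} [TopologicalSpace X] (n : ℕ) (T S : Set X) :
    AddSubgroup (SChain n X) :=
  (chainsIn (n + 1) T).map (bnd n) ⊔ chainsIn n S

/-- Relative singular homology `H_n(T, S; ℤ)` of a pair of subspaces `S ⊆ T ⊆ X`.
The absolute homology of the subspace `T` is `SH n T ∅`. -/
abbrev SH {X : Type u} [TopologicalSpace X] (n : ℕ) (T S : Set X) : Type u :=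
  ↥(relCyc n T S) ⧸ (relBdry n T S).comap (relCyc n T S).subtype

/-- The class in relative homology represented by a relative cycle. -/
def SHmk {X : Type u} [TopologicalSpace X] {n : ℕ} {T S : Set X} :
    ↥(relCyc n T S) →+ SH n T S :=
  QuotientAddGroup.mk' _

lemma chainsIn_mono {X : Type u} [TopologicalSpace X] (n : ℕ) {S S' : Set X} (h : S ⊆ S') :
    chainsIn n S ≤ chainsIn n S' :=
  AddSubgroup.closure_mono (by rintro c ⟨σ, hσ, rfl⟩; exact ⟨σ, hσ.trans h, rfl⟩)

lemma relCyc_mono {X : Type u} [TopologicalSpace X] {n : ℕ} {T T' S S' : Set X}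
    (hT : T ⊆ T') (hS : S ⊆ S') : relCyc n T S ≤ relCyc n T' S' := by
  cases n with
  | zero => exact chainsIn_mono 0 hT
  | succ m =>
      exact inf_le_inf (chainsIn_mono _ hT) (AddSubgroup.comap_mono (chainsIn_mono _ hS))

lemma relBdry_mono {X : Type u} [TopologicalSpace X] {n : ℕ} {T T' S S' : Set X}
    (hT : T ⊆ T') (hS : S ⊆ S') : relBdry n T S ≤ relBdry n T' S' :=
  sup_le_sup (AddSubgroup.map_mono (chainsIn_mono _ hT)) (chainsIn_mono _ hS)

/-- The map on relative homology induced by an inclusion of pairs `(T, S) ⊆ (T', S')`. -/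
def SHmap {X : Type u} [TopologicalSpace X] {n : ℕ} {T T' S S' : Set X}
    (hT : T ⊆ T') (hS : S ⊆ S') : SH n T S →+ SH n T' S' :=
  QuotientAddGroup.map _ _ (AddSubgroup.inclusion (relCyc_mono hT hS)) (by
    intro x hx
    simp only [AddSubgroup.mem_comap, AddSubgroup.coe_subtype, AddSubgroup.coe_inclusion] at hx ⊢
    exact relBdry_mono hT hS hx)

/-- An element generating the ambient group. -/
def IsGenerator {G : Type v} [AddGroup G] (g : G) : Prop :=
  AddSubgroup.zmultiples g = ⊤

/-- The support of a relative homology class `α ∈ H_n(X, S)`: the set of points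
`x ∈ X \ S` such that the image of `α` in `H_n(X, X \ {x})` is nonzero. -/
def spt {X : Type u} [TopologicalSpace X] {n : ℕ} {S : Set X}
    (α : SH n (Set.univ : Set X) S) : Set X :=
  {x | x ∉ S ∧ ∀ h : S ⊆ (Set.univ : Set X) \ {x}, SHmap (subset_refl _) h α ≠ 0}

/-- `Connects α β` says that the connecting homomorphism
`∂ : H_{m+1}(T, S) → H_m(S)` of the pair `(T, S)` sends `α` to `β`. -/
def Connects {X : Type u} [TopologicalSpace X] {m : ℕ} {T S : Set X}
    (α : SH (m + 1) T S) (β : SH m S (∅ : Set X)) : Prop :=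
  ∃ (c : relCyc (m + 1) T S) (b : relCyc m S (∅ : Set X)),
    (b : SChain m X) = bnd m (c : SChain (m + 1) X) ∧ SHmk c = α ∧ SHmk b = β

/-- The homological dimension of a topological space: the supremum of all `n` such that
`H_n(U, V) ≠ 0` for some open pair `V ⊆ U`. -/
def homDim (X : Type u) [TopologicalSpace X] : ℕ∞ :=
  ⨆ (n : ℕ) (_ : ∃ U V : Set X, IsOpen U ∧ IsOpen V ∧ V ⊆ U ∧ ∃ α : SH n U V, α ≠ 0),
    (n : ℕ∞)



/-! ### Metric geometry: lengths, geodesics, CAT(κ) -/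

/-- The length (one-dimensional Hausdorff measure) of a subset of a metric space. -/
def len {Z : Type v} [EMetricSpace Z] (E : Set Z) : ℝ≥0∞ :=
  letI : MeasurableSpace Z := borel Z
  haveI : BorelSpace Z := ⟨rfl⟩
  MeasureTheory.Measure.hausdorffMeasure 1 E

/-- The diameter `D_κ` of the model surface `M²_κ`. -/
def Dk (κ : ℝ) : ℝ≥0∞ :=
  if κ ≤ 0 then ⊤ else ENNReal.ofReal (Real.pi / Real.sqrt κ)

/-- Inverse hyperbolic cosine. -/
def acosh (x : ℝ) : ℝ := Real.log (x + Real.sqrt (x ^ 2 - 1))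

/-- `mdl κ a b θ` is the distance, in the model surface `M²_κ` of constant curvature `κ`,
between two points having distances `a` and `b` from a base point, the two sides enclosing
the angle `θ` there (law of cosines in constant curvature `κ`). -/
def mdl (κ a b θ : ℝ) : ℝ :=
  if κ = 0 then Real.sqrt (a ^ 2 + b ^ 2 - 2 * a * b * Real.cos θ)
  else if 0 < κ then
    (1 / Real.sqrt κ) *
      Real.arccos (Real.cos (Real.sqrt κ * a) * Real.cos (Real.sqrt κ * b) +
        Real.sin (Real.sqrt κ * a) * Real.sin (Real.sqrt κ * b) * Real.cos θ)
  else
    (1 / Real.sqrt (-κ)) *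
      acosh (Real.cosh (Real.sqrt (-κ) * a) * Real.cosh (Real.sqrt (-κ) * b) -
        Real.sinh (Real.sqrt (-κ) * a) * Real.sinh (Real.sqrt (-κ) * b) * Real.cos θ)

/-- `cmpAngle κ a b c` is the angle of the comparison triangle in the model surface `M²_κ`
at the vertex whose adjacent sides have lengths `b`, `c` and whose opposite side has
length `a`. -/
def cmpAngle (κ a b c : ℝ) : ℝ :=
  if κ = 0 then Real.arccos ((b ^ 2 + c ^ 2 - a ^ 2) / (2 * b * c))
  else if 0 < κ then
    Real.arccos ((Real.cos (Real.sqrt κ * a) -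
        Real.cos (Real.sqrt κ * b) * Real.cos (Real.sqrt κ * c)) /
      (Real.sin (Real.sqrt κ * b) * Real.sin (Real.sqrt κ * c)))
  else
    Real.arccos ((Real.cosh (Real.sqrt (-κ) * b) * Real.cosh (Real.sqrt (-κ) * c) -
        Real.cosh (Real.sqrt (-κ) * a)) /
      (Real.sinh (Real.sqrt (-κ) * b) * Real.sinh (Real.sqrt (-κ) * c)))

/-- `γ` restricted to `[a, b]` is a unit-speed geodesic (an isometric embedding of the
interval). -/
def GeodOn {X : Type u} [MetricSpace X] (γ : ℝ → X) (a b : ℝ) : Prop :=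
  ∀ s ∈ Set.Icc a b, ∀ t ∈ Set.Icc a b, dist (γ s) (γ t) = |s - t|

/-- `γ` is a unit-speed geodesic from `x` to `y` (parametrized on `[0, dist x y]`). -/
def GeodFromTo {X : Type u} [MetricSpace X] (γ : ℝ → X) (x y : X) : Prop :=
  γ 0 = x ∧ γ (dist x y) = y ∧ GeodOn γ 0 (dist x y)

/-- A complete metric space is CAT(κ) if points at distance `< D_κ` are joined by geodesics
and all geodesic triangles of perimeter `< 2 D_κ` satisfy the comparison inequality with the
model surface `M²_κ`: the distance from a vertex to a point on the opposite side is at most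
the corresponding distance in the comparison triangle. -/
structure IsCAT (κ : ℝ) (X : Type u) [MetricSpace X] : Prop where
  complete : CompleteSpace X
  geod : ∀ x y : X, ENNReal.ofReal (dist x y) < Dk κ → ∃ γ : ℝ → X, GeodFromTo γ x y
  cmp : ∀ (x y z : X) (γ : ℝ → X), GeodFromTo γ y z →
    ENNReal.ofReal (dist x y + dist y z + dist z x) < 2 * Dk κ →
    ∀ t ∈ Set.Icc 0 (dist y z),
      dist x (γ t) ≤ mdl κ (dist x y) t (cmpAngle κ (dist x z) (dist x y) (dist y z))

/-- A metric space has curvature bounded above by `κ` if every point has a neighborhood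
which is CAT(κ) (with the induced metric). -/
def CurvBddAbove (κ : ℝ) (X : Type u) [MetricSpace X] : Prop :=
  ∀ x : X, ∃ U : Set X, U ∈ nhds x ∧ IsCAT κ ↥U

/-- The set of lengths of curves inside `A` joining `x` to `y`. -/
def pathLengths {X : Type u} [MetricSpace X] (A : Set X) (x y : X) : Set ℝ≥0∞ :=
  {l | ∃ γ : ℝ → X, ContinuousOn γ (Set.Icc 0 1) ∧ γ 0 = x ∧ γ 1 = y ∧
    Set.MapsTo γ (Set.Icc 0 1) A ∧ l = eVariationOn γ (Set.Icc 0 1)}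

/-- A subset is Lipschitz connected if any two of its points are joined by a curve of
finite length inside the subset. -/
def LipConnected {X : Type u} [MetricSpace X] (A : Set X) : Prop :=
  ∀ x ∈ A, ∀ y ∈ A, ∃ l ∈ pathLengths A x y, l ≠ ⊤

/-- The distance function of an explicitly given metric space structure. -/
def mdist {A : Type v} (dA : MetricSpace A) (x y : A) : ℝ :=
  @dist A dA.toPseudoMetricSpace.toDist x y

/-- The topology of an explicitly given metric space structure. -/
def mtop {A : Type v} (dA : MetricSpace A) : TopologicalSpace A :=
  dA.toPseudoMetricSpace.toUniformSpace.toTopologicalSpace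

/-- `dA` is the intrinsic metric on the subset `A` induced by the ambient metric:
the distance between two points is the infimum of the lengths of curves in `A`
joining them. -/
def IsIntrinsicMetricOn {X : Type u} [MetricSpace X] (A : Set X) (dA : MetricSpace ↥A) : Prop :=
  ∀ x y : ↥A, ENNReal.ofReal (mdist dA x y) = sInf (pathLengths A (↑x) (↑y))

/-- The unit sphere `𝕊ⁿ ⊆ ℝⁿ⁺¹`. -/
def sphereSet (n : ℕ) : Set (EuclideanSpace ℝ (Fin (n + 1))) := Metric.sphere 0 1

/-- The closed unit ball `Bⁿ⁺¹ ⊆ ℝⁿ⁺¹`. -/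
def ballSet (n : ℕ) : Set (EuclideanSpace ℝ (Fin (n + 1))) := Metric.closedBall 0 1

/-- The inclusion `𝕊ⁿ ⊆ Bⁿ⁺¹`. -/
def sphereIncl (n : ℕ) (z : ↥(sphereSet n)) : ↥(ballSet n) :=
  ⟨z.1, Metric.sphere_subset_closedBall z.2⟩

/-- A space is aspherical if all homotopy groups `π_n`, `n ≥ 2`, vanish; equivalently,
every continuous map from the `n`-sphere extends continuously to the `(n+1)`-ball. -/
def Aspherical (Z : Type v) [TopologicalSpace Z] : Prop :=
  ∀ n : ℕ, 2 ≤ n → ∀ f : C(↥(sphereSet n), Z), ∃ F : C(↥(ballSet n), Z),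
    ∀ z : ↥(sphereSet n), F (sphereIncl n z) = f z

/-- The unit circle in `ℂ`. -/
def circleSet : Set ℂ := Metric.sphere 0 1

/-- The closed unit disc in `ℂ`. -/
def discSet : Set ℂ := Metric.closedBall 0 1

/-- A Jordan curve: a subset homeomorphic to the circle. -/
def IsJordan {Z : Type v} [TopologicalSpace Z] (Γ : Set Z) : Prop :=
  Nonempty (↥Γ ≃ₜ ↥circleSet)

/-- An arc: a subset homeomorphic to a compact interval. -/
def IsArc {Z : Type v} [TopologicalSpace Z] (A : Set Z) : Prop :=
  Nonempty (↥A ≃ₜ ↥(Set.Icc (0 : ℝ) 1))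

/-- A subset `A ⊆ X` is locally simply connected: every relative neighborhood of a point of
`A` contains a smaller one in which every loop can be contracted (within the bigger one). -/
def LocSimplyConnected {X : Type u} [MetricSpace X] (A : Set X) : Prop :=
  ∀ a ∈ A, ∀ U ∈ nhdsWithin a A, ∃ V ∈ nhdsWithin a A, V ⊆ U ∧
    ∀ f : C(↥circleSet, X), Set.range f ⊆ V ∩ A →
      ∃ F : C(↥discSet, X), Set.range F ⊆ U ∩ A ∧
        ∀ z : ↥circleSet, F ⟨z.1, Metric.sphere_subset_closedBall z.2⟩ = f z


/-! ### Jordan curves, interiors, cuts, majorization -/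

/-- `S` is the interior of the Jordan curve `Γ` in `X`: the support of the (unique) relative
homology class `α ∈ H₂(X, Γ)` whose boundary `∂α` is a generator `[Γ]` of `H₁(Γ)`. -/
def IsJInterior {X : Type u} [MetricSpace X] (Γ S : Set X) : Prop :=
  ∃ g : SH 1 Γ (∅ : Set X), IsGenerator g ∧
    ∃ α : SH 2 (Set.univ : Set X) Γ, Connects α g ∧ S = spt α

/-- `c` is a cut of the Jordan curve `Γ` with interior `S`: a geodesic segment contained in
`closure S` meeting `Γ` exactly in its two endpoints; `f`, `L` are its arclength
parametrization and length. -/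
def IsCutSeg {X : Type u} [MetricSpace X] (Γ S c : Set X) (f : ℝ → X) (L : ℝ) : Prop :=
  0 < L ∧ GeodOn f 0 L ∧ c = f '' Set.Icc 0 L ∧ c ⊆ closure S ∧ c ∩ Γ = {f 0, f L}

/-- `CutsInto Γ c Γp Γm`: `c` is a cut of the Jordan curve `Γ` subdividing it into the
two Jordan curves `Γp = Γ⁺ ∪ c` and `Γm = Γ⁻ ∪ c`, where `Γ⁺`, `Γ⁻` are the two arcs
of `Γ` determined by the endpoints of `c`. -/
def CutsInto {X : Type u} [MetricSpace X] (Γ c Γp Γm : Set X) : Prop :=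
  ∃ (S : Set X) (f : ℝ → X) (L : ℝ), IsJInterior Γ S ∧ IsCutSeg Γ S c f L ∧
    ∃ A B : Set X, IsArc A ∧ IsArc B ∧ A ∪ B = Γ ∧ A ∩ B = {f 0, f L} ∧
      Γp = A ∪ c ∧ Γm = B ∪ c

/-- A `k`-fold iterated cut of `Γ`, organized along the complete binary tree of words of
length `≤ k`: `C w` is the Jordan curve at node `w` and `cseg w` is the cut applied to it;
the `2^k` resulting Jordan curves are the `C w` with `w.length = k`. -/
def IsIterCut {X : Type u} [MetricSpace X] (k : ℕ) (Γ : Set X)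
    (C : List Bool → Set X) (cseg : List Bool → Set X) : Prop :=
  C [] = Γ ∧ ∀ w : List Bool, w.length < k →
    CutsInto (C w) (cseg w) (C (w ++ [false])) (C (w ++ [true]))

/-- The Jordan curve `Γ` (of length `l`, with interior `S`) is `ε`-degenerated:
every cut of `Γ` has length `< 2 ε l`. -/
def Degenerate {X : Type u} [MetricSpace X] (Γ S : Set X) (ε l : ℝ) : Prop :=
  ∀ (c : Set X) (f : ℝ → X) (L : ℝ), IsCutSeg Γ S c f L → L < 2 * ε * l

/-- `f : Y → X` is a majorization of the rectifiable Jordan curve `Γ ⊆ X`: a `1`-Lipschitz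
map sending some Jordan curve `Γ' ⊆ Y` bijectively and in an arc length preserving way
onto `Γ`. -/
def Majorizes {Y : Type v} {X : Type u} [MetricSpace Y] [MetricSpace X]
    (f : Y → X) (Γ : Set X) : Prop :=
  LipschitzWith 1 f ∧ ∃ Γ' : Set Y, IsJordan Γ' ∧ Set.InjOn f Γ' ∧ f '' Γ' = Γ ∧
    ∀ E : Set Y, E ⊆ Γ' → len (f '' E) = len E

/-! ### The model surfaces `M²_κ` -/

/-- `γ` is a local geodesic (defined on all of `ℝ`). -/
def IsLocalGeod {X : Type u} [MetricSpace X] (γ : ℝ → X) : Prop :=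
  ∀ t : ℝ, ∃ ε > 0, GeodOn γ (t - ε) (t + ε)

/-- Curvature bounded below by `κ` locally, in the (reversed) triangle comparison sense. -/
def IsCBBLocal (κ : ℝ) (X : Type u) [MetricSpace X] : Prop :=
  ∀ p : X, ∃ U ∈ nhds p, ∀ (x y z : X) (γ : ℝ → X), x ∈ U → y ∈ U → z ∈ U →
    GeodFromTo γ y z → (∀ t ∈ Set.Icc 0 (dist y z), γ t ∈ U) →
    ENNReal.ofReal (dist x y + dist y z + dist z x) < 2 * Dk κ →
    ∀ t ∈ Set.Icc 0 (dist y z),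
      mdl κ (dist x y) t (cmpAngle κ (dist x z) (dist x y) (dist y z)) ≤ dist x (γ t)

/-- A characterization of the model surface `M²_κ`: a complete, proper, simply connected,
geodesically complete two-dimensional space of constant curvature `κ` (curvature both
bounded above and below by `κ`). -/
structure IsModelSurface (κ : ℝ) (M : Type u) [MetricSpace M] : Prop where
  cat : IsCAT κ M
  lower : IsCBBLocal κ M
  dim : homDim M = 2
  simpConn : SimplyConnectedSpace M
  proper : ProperSpace M
  geodComplete : ∀ x y : M, x ≠ y → ∃ γ : ℝ → M, IsLocalGeod γ ∧ GeodFromTo γ x y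

/-- A geodesically convex subset. -/
def GeodConvex {M : Type u} [MetricSpace M] (C : Set M) : Prop :=
  ∀ x ∈ C, ∀ y ∈ C, ∃ γ : ℝ → M, GeodFromTo γ x y ∧ ∀ t ∈ Set.Icc 0 (dist x y), γ t ∈ C

/-- `Γ` is majorized by a closed (geodesically) convex subset of the model surface `M²_κ`,
with the image of the majorization contained in `N ⊆ X`. -/
def MajorizedByConvexModel (κ : ℝ) {X : Type u} [MetricSpace X] (Γ N : Set X) : Prop :=
  ∃ (M : Type u) (dM : MetricSpace M), @IsModelSurface κ M dM ∧
    ∃ Cs : Set M, @IsClosed M (mtop dM) Cs ∧ @GeodConvex M dM Cs ∧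
      ∃ f : ↥Cs → X, @Majorizes ↥Cs X (@Subtype.metricSpace M _ dM) _ f Γ ∧
        Set.range f ⊆ N

/-! ### Directions and angles -/

/-- The Alexandrov upper angle between two unit-speed geodesics emanating from a common
point (`γ₁ 0 = γ₂ 0`): the limsup of Euclidean comparison angles. -/
def upperAngle {X : Type u} [MetricSpace X] (γ₁ γ₂ : ℝ → X) : ℝ :=
  Filter.limsup (fun st : ℝ × ℝ => cmpAngle 0 (dist (γ₁ st.1) (γ₂ st.2)) st.1 st.2)
    ((nhdsWithin 0 (Set.Ioi 0)) ×ˢ (nhdsWithin 0 (Set.Ioi 0)))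

/-- The geodesics emanating from `p` whose image is contained in `S`; these represent the
space of directions `Σ_p S ⊆ Σ_p X`. -/
def GeodDirsIn {X : Type u} [MetricSpace X] (p : X) (S : Set X) : Set (ℝ → X) :=
  {γ | ∃ L : ℝ, 0 < L ∧ GeodOn γ 0 L ∧ γ 0 = p ∧ γ '' Set.Icc 0 L ⊆ S}

/-! ### Spherical geometry -/

/-- The spherical (angular) distance between two unit vectors of `ℝ³`. -/
def sdist (x y : EuclideanSpace ℝ (Fin 3)) : ℝ := Real.arccos (inner ℝ x y)

/-- The spherical angle `∠_y(x, z)` at the vertex `y` of the spherical triangle `(x, y, z)`: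
the angle between the projections of `x` and `z` to the tangent plane of the unit sphere
at `y`. -/
def sangle (y x z : EuclideanSpace ℝ (Fin 3)) : ℝ :=
  InnerProductGeometry.angle (x - (inner ℝ x y : ℝ) • y) (z - (inner ℝ z y : ℝ) • y)

/-! ### Manifolds, fundamental classes -/

/-- `M ⊆ X` is a locally Euclidean `m`-manifold (with the subspace topology). -/
def LocallyEuclidean (m : ℕ) {X : Type u} [TopologicalSpace X] (M : Set X) : Prop :=
  ∀ x : ↥M, ∃ U : Set ↥M, IsOpen U ∧ x ∈ U ∧
    Nonempty (↥U ≃ₜ EuclideanSpace ℝ (Fin m))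

/-- `μ ∈ H_m(M)` is a fundamental class of the compact oriented `m`-manifold `M`:
its image in each local homology group `H_m(M, M \ {x})` is a generator. -/
def IsFundClass {X : Type u} [TopologicalSpace X] {m : ℕ} {M : Set X}
    (μ : SH m M (∅ : Set X)) : Prop :=
  ∀ x, x ∈ M → IsGenerator (SHmap (subset_refl M) (Set.empty_subset _) μ : SH m M (M \ {x}))

/-! ### Asymptotic cones -/

/-- `C` is an asymptotic cone of `X`: an ultralimit of rescalings `(X, dist / s_k, p_k)`
along a nonprincipal ultrafilter, where `s_k → ∞`. -/
def IsAsympCone (X : Type u) [MetricSpace X] (C : Type u) [MetricSpace C] : Prop :=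
  ∃ ω : Ultrafilter ℕ, (∀ s : Set ℕ, s.Finite → s ∉ ω) ∧
    ∃ s : ℕ → ℝ, (∀ k, 0 < s k) ∧ Filter.Tendsto s Filter.atTop Filter.atTop ∧
      ∃ p : ℕ → X,
        ∃ Φ : {u : ℕ → X // ∃ B : ℝ, ∀ k, dist (u k) (p k) ≤ B * s k} → C,
          Function.Surjective Φ ∧
            ∀ u v, Filter.Tendsto (fun k => dist (u.1 k) (v.1 k) / s k) ω
              (nhds (dist (Φ u) (Φ v)))



/-- `w : Z → X` exhibits the CAT(κ) disc `Z` as a majorization of the Jordan curve `Γ`,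
restricting to an arc length preserving homeomorphism from the boundary circle `∂Z`
of the disc onto `Γ`. -/
def IsDiscMajorization (κ : ℝ) {X : Type u} [MetricSpace X] (Γ : Set X)
    (Z : Type u) [MetricSpace Z] (w : Z → X) : Prop :=
  IsCAT κ Z ∧ ∃ ψ : Z ≃ₜ ↥discSet,
    LipschitzWith 1 w ∧
    Set.InjOn w (ψ ⁻¹' {z : ↥discSet | (z : ℂ) ∈ circleSet}) ∧
    w '' (ψ ⁻¹' {z : ↥discSet | (z : ℂ) ∈ circleSet}) = Γ ∧
    ∀ E : Set Z, E ⊆ ψ ⁻¹' {z : ↥discSet | (z : ℂ) ∈ circleSet} →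
      len (w '' E) = len E

end Paper

open Paper

open scoped InnerProductSpace

/-! The angle condition at `y` gives `cos |x,z| ≤ cos |x,y| · cos |z,y|`. Writing
`a = |x,y|`, `b = |z,y|`, `t = (1 - ρ) b`, it suffices to show `cos a cos b ≤ cos (a - t)`,
since then `a - t ≤ |x,z|` by monotonicity of `cos` on `[0, π]`. When `a ≤ π/2` this follows
from `cos b ≤ cos t`; when `a > π/2` the loss `(-cos a)(cos t - cos b) ≤ ρ b` is beaten by the
gain `sin a sin t ≥ sin (l₀/2) · (2/π) (1 - ρ) b` (Jordan's inequality); the two balance for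
`ρ = k / (1 + k)` with `k = 2 sin (l₀/2) / π`. -/

namespace InnerProductGeometry

variable {V : Type*} [NormedAddCommGroup V] [InnerProductSpace ℝ V]

theorem inner_nonpos_of_pi_div_two_le_angle {u v : V} (h : Real.pi / 2 ≤ angle u v) :
    ⟪u, v⟫_ℝ ≤ 0 := by
  rw [← cos_angle_mul_norm_mul_norm]
  exact mul_nonpos_of_nonpos_of_nonneg
    (Real.cos_nonpos_of_pi_div_two_le_of_le h (by linarith [angle_le_pi u v, Real.pi_pos]))
    (by positivity)

theorem inner_le_inner_mul_inner_of_pi_div_two_le_angle {x y z : V} (hy : ‖y‖ = 1)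
    (h : Real.pi / 2 ≤ angle (x - ⟪x, y⟫_ℝ • y) (z - ⟪z, y⟫_ℝ • y)) :
    ⟪x, z⟫_ℝ ≤ ⟪x, y⟫_ℝ * ⟪z, y⟫_ℝ := by
  have hyy : ⟪y, y⟫_ℝ = 1 := by rw [real_inner_self_eq_norm_sq, hy, one_pow]
  have hproj := inner_nonpos_of_pi_div_two_le_angle h
  simp only [inner_sub_left, inner_sub_right, real_inner_smul_left, real_inner_smul_right,
    hyy, real_inner_comm z y] at hproj
  linarith

end InnerProductGeometry

namespace Paper

theorem sdist_comm (x y : EuclideanSpace ℝ (Fin 3)) : sdist x y = sdist y x := by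
  rw [sdist, sdist, real_inner_comm]

theorem sdist_nonneg (x y : EuclideanSpace ℝ (Fin 3)) : 0 ≤ sdist x y :=
  Real.arccos_nonneg _

theorem sdist_le_pi (x y : EuclideanSpace ℝ (Fin 3)) : sdist x y ≤ Real.pi :=
  Real.arccos_le_pi _

theorem cos_sdist {x y : EuclideanSpace ℝ (Fin 3)} (hx : ‖x‖ = 1) (hy : ‖y‖ = 1) :
    Real.cos (sdist x y) = ⟪x, y⟫_ℝ := by
  have h := abs_real_inner_le_norm x y
  rw [hx, hy, one_mul] at h
  exact Real.cos_arccos (abs_le.mp h).1 (abs_le.mp h).2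

theorem cos_sdist_le_of_pi_div_two_le_sangle {x y z : EuclideanSpace ℝ (Fin 3)}
    (hx : ‖x‖ = 1) (hy : ‖y‖ = 1) (hz : ‖z‖ = 1) (h : Real.pi / 2 ≤ sangle y x z) :
    Real.cos (sdist x z) ≤ Real.cos (sdist x y) * Real.cos (sdist z y) := by
  rw [cos_sdist hx hz, cos_sdist hx hy, cos_sdist hz hy]
  exact InnerProductGeometry.inner_le_inner_mul_inner_of_pi_div_two_le_angle hy h

end Paper

namespace Real

theorem cos_mul_cos_le_cos_sub {a b t : ℝ} (ha : 0 ≤ a) (ha' : a ≤ π) (ht : 0 ≤ t)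
    (htb : t ≤ b) (hb : b ≤ π / 2) (hobtuse : π / 2 < a → b - t ≤ sin a * sin t) :
    cos a * cos b ≤ cos (a - t) := by
  have hcos_tb : cos b ≤ cos t := cos_le_cos_of_nonneg_of_le_pi ht (by linarith) htb
  have hsin_a : 0 ≤ sin a := sin_nonneg_of_nonneg_of_le_pi ha ha'
  have hsin_t : 0 ≤ sin t := sin_nonneg_of_nonneg_of_le_pi ht (by linarith)
  rw [cos_sub]
  rcases le_or_gt a (π / 2) with hacute | hobtuse_a
  · have hcos_a : 0 ≤ cos a := cos_nonneg_of_mem_Icc ⟨by linarith [pi_pos], hacute⟩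
    nlinarith [mul_nonneg hsin_a hsin_t]
  · have hlip : cos t - cos b ≤ b - t := by
      simpa [abs_of_nonneg (sub_nonneg.mpr hcos_tb), abs_of_nonpos (sub_nonpos.mpr htb)]
        using abs_cos_sub_cos_le t b
    nlinarith [neg_one_le_cos a, hobtuse hobtuse_a]

theorem le_add_of_cos_le_cos_sub {a c t : ℝ} (hc : 0 ≤ c) (hat : a - t ≤ π)
    (hcos : cos c ≤ cos (a - t)) : a ≤ c + t := by
  by_contra! hlt
  linarith [cos_lt_cos_of_nonneg_of_le_pi hc hat (by linarith)]

theorem sin_le_sin_of_pi_div_two_le {a m : ℝ} (ha : π / 2 ≤ a) (ham : a ≤ m)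
    (hm : m ≤ π) : sin m ≤ sin a := by
  rw [← sin_pi_sub m, ← sin_pi_sub a]
  exact sin_le_sin_of_le_of_le_pi_div_two (by linarith) (by linarith) (by linarith)

end Real

theorem exists_mul_le_sin_mul_sin {m : ℝ} (hm : 0 < m) (hm' : m < Real.pi) :
    ∃ ρ : ℝ, 0 < ρ ∧ ρ < 1 ∧
      ∀ a b : ℝ, Real.pi / 2 < a → a ≤ m → 0 ≤ b → b ≤ Real.pi / 2 →
        ρ * b ≤ Real.sin a * Real.sin ((1 - ρ) * b) := by
  set k := 2 * Real.sin m / Real.pi with hk_def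
  have hk : 0 < k := by have := Real.sin_pos_of_pos_of_lt_pi hm hm'; positivity
  set ρ := k / (1 + k) with hρ_def
  have hρ1 : ρ < 1 := (div_lt_one (by linarith)).mpr (by linarith)
  have hρ : ρ = k * (1 - ρ) := by rw [hρ_def]; field_simp; ring
  refine ⟨ρ, by positivity, hρ1, fun a b ha ham hb hb' => ?_⟩
  have htb : 0 ≤ (1 - ρ) * b := mul_nonneg (by linarith) hb
  have hjordan := Real.mul_le_sin htb (by nlinarith)
  calc ρ * b = Real.sin m * (2 / Real.pi * ((1 - ρ) * b)) := by
        linear_combination b * hρ + b * (1 - ρ) * hk_def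
    _ ≤ Real.sin a * Real.sin ((1 - ρ) * b) :=
        mul_le_mul (Real.sin_le_sin_of_pi_div_two_le ha.le ham hm'.le) hjordan (by positivity)
          (Real.sin_nonneg_of_nonneg_of_le_pi (by linarith) (by linarith))

/-- For every `0 < l₀ < 2π` there is a constant `ρ = ρ(l₀) > 0` such that
every spherical triangle `(x, y, z)` on the unit sphere `𝕊²` with `|y,z| ≤ π/2`,
`|x,y| ≤ l₀/2` and angle `∠_y(x,z) ≥ π/2` satisfies
`|x,y| ≤ |x,z| + |z,y| − ρ |z,y|`. -/
theorem statement15 (l₀ : ℝ) (hl₀ : 0 < l₀) (hl₀' : l₀ < 2 * Real.pi) :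
    ∃ ρ : ℝ, 0 < ρ ∧
      ∀ x y z : EuclideanSpace ℝ (Fin 3), ‖x‖ = 1 → ‖y‖ = 1 → ‖z‖ = 1 →
        sdist y z ≤ Real.pi / 2 → sdist x y ≤ l₀ / 2 → Real.pi / 2 ≤ sangle y x z →
        sdist x y ≤ sdist x z + sdist z y - ρ * sdist z y := by
  obtain ⟨ρ, hρ, hρ1, hgain⟩ :=
    exists_mul_le_sin_mul_sin (m := l₀ / 2) (by linarith) (by linarith)
  refine ⟨ρ, hρ, fun x y z hx hy hz hyz hxy hangle => ?_⟩
  rw [sdist_comm y z] at hyz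
  have hkey := Real.cos_mul_cos_le_cos_sub (t := (1 - ρ) * sdist z y)
    (sdist_nonneg x y) (sdist_le_pi x y)
    (by nlinarith [sdist_nonneg z y]) (by nlinarith [sdist_nonneg z y]) hyz
    fun ha => by linarith [hgain _ _ ha hxy (sdist_nonneg z y) hyz]
  have hshort := Real.le_add_of_cos_le_cos_sub (sdist_nonneg x z)
    (by nlinarith [sdist_le_pi x y, sdist_nonneg z y])
    ((cos_sdist_le_of_pi_div_two_le_sangle hx hy hz hangle).trans hkey)
  linarith
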